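/- arXiv:2308.09344 — 2 statements merged into one kernel-verified Lean document; each statement's English description precedes it below -/
import Mathlib

section
/- With g_n = |Av_n(132, 123*)| and f_n as the number of x ∈ Av_n(132) with ind_x(n)-1 = ind_x(n-1) > 1 and deletion of n from x avoiding 123*, for all n ≥ 2 it holds that Σ_{i=0}^{n-1} g_i g_{n-1-i} = g_n + f_n. -/
/-- `isoOrd p q` : `q` is order-isomorphic to `p`. -/
def isoOrd (p q : List ℕ) : Bool :=
  (p.length == q.length) &&
    (List.range p.length).all fun i =>
      (List.range p.length).all fun j =>
        decide ((p.getD i 0 < p.getD j 0) ↔ (q.getD i 0 < q.getD j 0))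

/-- `containsPat p w` : the word `w` contains an occurrence of the classical pattern `p`. -/
def containsPat (p w : List ℕ) : Bool :=
  (w.sublistsLen p.length).any (isoOrd p)

/-- Pop phase of the right-greedy `T`-avoiding stack: with next input `a`,
pop entries from the top of the stack while pushing `a` would create a pattern of `T`
(read from top to bottom).  Returns the remaining stack and the popped entries in output order. -/
def popPhase (T : List (List ℕ)) (a : ℕ) : List ℕ → List ℕ × List ℕ
  | [] => ([], [])
  | b :: s =>
    if T.any (fun p => containsPat p (a :: b :: s)) then
      let r := popPhase T a s
      (r.1, b :: r.2)
    else (b :: s, [])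

/-- Main loop of the right-greedy `T`-avoiding stack map. -/
def stkAux (T : List (List ℕ)) : List ℕ → List ℕ → List ℕ → List ℕ
  | [], stack, out => out ++ stack
  | a :: rest, stack, out =>
    let r := popPhase T a stack
    stkAux T rest (a :: r.1) (out ++ r.2)

/-- The generalized stack-sorting map `s_T` : the input is pushed right-greedily through a
stack which must avoid (read from top to bottom) every pattern in `T`. -/
def sT (T : List (List ℕ)) (x : List ℕ) : List ℕ := stkAux T x [] []

/-- West's stack-sorting map: the stack must be increasing from top to bottom,
i.e. must avoid `21` read from top to bottom. -/
def westSort (x : List ℕ) : List ℕ := sT [[2,1]] x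

/-- `x` is a permutation of `{1,…,n}`, written as a list. -/
def IsPermList (n : ℕ) (x : List ℕ) : Prop := x.Perm (List.range' 1 n)

/-- The identity permutation `1 2 … n`. -/
def idPerm (n : ℕ) : List ℕ := List.range' 1 n

/-- `x` contains the bivincular pattern `132*` : positions `i < j` (0-based) with
`x i < x (j+1)` and `x j = x (j+1) + 1`. -/
def Has132Star (x : List ℕ) : Prop :=
  ∃ i j, i < j ∧ j + 1 < x.length ∧ x.getD i 0 < x.getD (j+1) 0 ∧
    x.getD j 0 = x.getD (j+1) 0 + 1

/-- `x` contains the bivincular pattern `123*` : positions `i < j` (0-based) with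
`x i < x j` and `x (j+1) = x j + 1`. -/
def Has123Star (x : List ℕ) : Prop :=
  ∃ i j, i < j ∧ j + 1 < x.length ∧ x.getD i 0 < x.getD j 0 ∧
    x.getD (j+1) 0 = x.getD j 0 + 1

/-- Boolean version of `Has132Star`. -/
def has132star (x : List ℕ) : Bool :=
  (List.range x.length).any fun j =>
    decide (j + 1 < x.length) && (x.getD j 0 == x.getD (j+1) 0 + 1) &&
      (List.range j).any fun i => decide (x.getD i 0 < x.getD (j+1) 0)

/-- Boolean version of `Has123Star`. -/
def has123star (x : List ℕ) : Bool :=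
  (List.range x.length).any fun j =>
    decide (j + 1 < x.length) && (x.getD (j+1) 0 == x.getD j 0 + 1) &&
      (List.range j).any fun i => decide (x.getD i 0 < x.getD j 0)

/-- `g n = |Av_n(132, 123*)|`. -/
def gCount (n : ℕ) : ℕ :=
  ((List.range' 1 n).permutations.filter fun x =>
    !containsPat [1,3,2] x && !has123star x).length

/-- `f n` : the number of `x ∈ Av_n(132)` with `ind_x(n) - 1 = ind_x(n-1) > 1` (1-based)
whose deletion of `n` avoids `123*`. -/
def fCount (n : ℕ) : ℕ :=
  ((List.range' 1 n).permutations.filter fun x =>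
    !containsPat [1,3,2] x && (x.idxOf n == x.idxOf (n-1) + 1) &&
      decide (1 ≤ x.idxOf (n-1)) && !has123star (x.erase n)).length


/-!
If `x = L ++ n :: R` is a 132-avoiding permutation of `1, …, n`, every entry of `L` exceeds every
entry of `R` (otherwise `a, n, b` is a `132`), so `L` is a 132-avoiding permutation of
`n - k, …, n - 1` and `R` one of `1, …, n - 1 - k`, where `k` is the position of `n`. Since `L` lies
above `R`, an occurrence of `123*` in `L ++ R` lies inside `L` or inside `R`; hence the 132-avoiders
whose deletion of `n` avoids `123*` number `∑ g_k g_{n-1-k}`. Reinserting `n` creates a new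
occurrence of `123*` exactly when `n - 1` stands immediately before `n` and is not the first entry,
so these permutations split into the `g_n` that avoid `123*` and the `f_n` that do not.
-/

def Has132 (x : List ℕ) : Prop :=
  ∃ a b c, [a, b, c].Sublist x ∧ a < c ∧ c < b

theorem isoOrd_132_iff {a b c : ℕ} : isoOrd [1, 3, 2] [a, b, c] = true ↔ a < c ∧ c < b := by
  simp [isoOrd, List.range_succ]
  omega

theorem containsPat_132_iff {x : List ℕ} : containsPat [1, 3, 2] x = true ↔ Has132 x := by
  simp only [containsPat, List.any_eq_true, List.mem_sublistsLen]
  constructor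
  · rintro ⟨l, ⟨hl, hlen⟩, hiso⟩
    match l, hlen with
    | [a, b, c], _ => exact ⟨a, b, c, hl, isoOrd_132_iff.1 hiso⟩
  · rintro ⟨a, b, c, hl, hpat⟩
    exact ⟨[a, b, c], ⟨hl, rfl⟩, isoOrd_132_iff.2 hpat⟩

theorem has123star_iff {x : List ℕ} : has123star x = true ↔ Has123Star x := by
  simp only [has123star, Has123Star, List.any_eq_true, List.mem_range, Bool.and_eq_true,
    decide_eq_true_eq, beq_iff_eq]
  constructor
  · rintro ⟨j, -, ⟨hj, hsucc⟩, i, hij, hlt⟩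
    exact ⟨i, j, hij, hj, hlt, hsucc⟩
  · rintro ⟨i, j, hij, hj, hlt, hsucc⟩
    exact ⟨j, by omega, ⟨hj, hsucc⟩, i, hij, hlt⟩

theorem Has132.mono {x y : List ℕ} (hxy : x.Sublist y) : Has132 x → Has132 y :=
  fun ⟨a, b, c, h, hac, hcb⟩ => ⟨a, b, c, h.trans hxy, hac, hcb⟩

theorem List.triple_sublist_append_iff {α : Type*} {a b c : α} {A B : List α} :
    [a, b, c].Sublist (A ++ B) ↔ [a, b, c].Sublist A ∨ ([a, b].Sublist A ∧ c ∈ B) ∨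
      (a ∈ A ∧ [b, c].Sublist B) ∨ [a, b, c].Sublist B := by
  rw [List.sublist_append_iff]
  constructor
  · rintro ⟨l₁, l₂, h, h₁, h₂⟩
    rcases l₁ with _ | ⟨p, _ | ⟨q, _ | ⟨r, _ | ⟨s, t⟩⟩⟩⟩ <;>
      simp only [List.cons_append, List.nil_append, List.cons.injEq, List.nil_eq, reduceCtorEq,
        and_false] at h
    · simp_all
    · obtain ⟨rfl, rfl⟩ := h; simp_all
    · obtain ⟨rfl, rfl, rfl⟩ := h; simp_all
    · obtain ⟨rfl, rfl, rfl, rfl⟩ := h; simp_all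
  · rintro (h | ⟨h, hc⟩ | ⟨ha, h⟩ | h)
    · exact ⟨[a, b, c], [], by simp, h, List.nil_sublist _⟩
    · exact ⟨[a, b], [c], by simp, h, List.singleton_sublist.2 hc⟩
    · exact ⟨[a], [b, c], by simp, List.singleton_sublist.2 ha, h⟩
    · exact ⟨[], [a, b, c], by simp, List.nil_sublist _, h⟩

theorem has132_append_of_le {A B : List ℕ} (hBA : ∀ a ∈ A, ∀ b ∈ B, b ≤ a) :
    Has132 (A ++ B) ↔ Has132 A ∨ Has132 B := by
  refine ⟨?_, fun h => h.elim (Has132.mono (List.sublist_append_left A B))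
    (Has132.mono (List.sublist_append_right A B))⟩
  rintro ⟨a, b, c, h, hac, hcb⟩
  rcases List.triple_sublist_append_iff.1 h with h | ⟨h, hc⟩ | ⟨ha, h⟩ | h
  · exact Or.inl ⟨a, b, c, h, hac, hcb⟩
  · have := hBA a (h.subset (by simp)) c hc
    omega
  · have := hBA a ha c (h.subset (by simp))
    omega
  · exact Or.inr ⟨a, b, c, h, hac, hcb⟩

theorem has132_concat_of_le {L : List ℕ} {n : ℕ} (hL : ∀ a ∈ L, a ≤ n) :
    Has132 (L ++ [n]) ↔ Has132 L := by
  refine ⟨?_, Has132.mono (List.sublist_append_left L [n])⟩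
  rintro ⟨a, b, c, h, hac, hcb⟩
  rcases List.triple_sublist_append_iff.1 h with h | ⟨h, hc⟩ | ⟨-, h⟩ | h
  · exact ⟨a, b, c, h, hac, hcb⟩
  · have := hL b (h.subset (by simp))
    simp only [List.mem_singleton] at hc
    omega
  · simpa using h.length_le
  · simpa using h.length_le

theorem has132_map_of_strictMono {f : ℕ → ℕ} (hf : StrictMono f) {x : List ℕ} :
    Has132 (x.map f) ↔ Has132 x := by
  constructor
  · rintro ⟨a, b, c, h, hac, hcb⟩
    obtain ⟨l, hl, hmap⟩ := List.sublist_map_iff.1 h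
    match l, hmap with
    | [a', b', c'], hmap =>
      simp only [List.map_cons, List.map_nil, List.cons.injEq, and_true] at hmap
      obtain ⟨rfl, rfl, rfl⟩ := hmap
      exact ⟨a', b', c', hl, hf.lt_iff_lt.1 hac, hf.lt_iff_lt.1 hcb⟩
  · rintro ⟨a, b, c, h, hac, hcb⟩
    exact ⟨f a, f b, f c, by simpa using h.map f, hf hac, hf hcb⟩

theorem List.getD_mem_of_lt {α : Type*} {l : List α} {i : ℕ} (h : i < l.length) (d : α) :
    l.getD i d ∈ l := by
  rw [List.getD_eq_getElem _ _ h]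
  exact List.getElem_mem h

theorem List.getD_append_length_add {α : Type*} (A B : List α) (i : ℕ) (d : α) :
    (A ++ B).getD (A.length + i) d = B.getD i d := by
  rw [List.getD_append_right _ _ _ _ (by omega), Nat.add_sub_cancel_left]

theorem has123Star_append_of_le {A B : List ℕ} (hBA : ∀ a ∈ A, ∀ b ∈ B, b ≤ a) :
    Has123Star (A ++ B) ↔ Has123Star A ∨ Has123Star B := by
  have left {i : ℕ} (hi : i < A.length) := List.getD_append A B 0 i hi
  have right {i : ℕ} (hi : A.length ≤ i) : (A ++ B).getD i 0 = B.getD (i - A.length) 0 :=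
    List.getD_append_right A B 0 i hi
  constructor
  · rintro ⟨i, j, hij, hj, hlt, hsucc⟩
    rw [List.length_append] at hj
    by_cases hjA : j + 1 < A.length
    · rw [left (by omega), left (by omega)] at hlt
      rw [left hjA, left (by omega)] at hsucc
      exact Or.inl ⟨i, j, hij, hjA, hlt, hsucc⟩
    by_cases hjA' : j < A.length
    · rw [right (by omega), left hjA'] at hsucc
      have := hBA _ (A.getD_mem_of_lt hjA' 0) _ (B.getD_mem_of_lt (i := j + 1 - A.length)
        (by omega) 0)
      omega
    by_cases hiA : i < A.length
    · rw [left hiA, right (by omega)] at hlt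
      have := hBA _ (A.getD_mem_of_lt hiA 0) _ (B.getD_mem_of_lt (i := j - A.length) (by omega) 0)
      omega
    refine Or.inr ⟨i - A.length, j - A.length, by omega, by omega, ?_, ?_⟩
    · rwa [right (by omega), right (by omega)] at hlt
    · rwa [right (by omega), right (by omega), show j + 1 - A.length = j - A.length + 1 by omega]
        at hsucc
  · rintro (⟨i, j, hij, hj, hlt, hsucc⟩ | ⟨i, j, hij, hj, hlt, hsucc⟩)
    · refine ⟨i, j, hij, by rw [List.length_append]; omega, ?_, ?_⟩
      · rwa [left (by omega), left (by omega)]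
      · rwa [left hj, left (by omega)]
    · refine ⟨A.length + i, A.length + j, by omega, by rw [List.length_append]; omega, ?_, ?_⟩
      · rwa [List.getD_append_length_add, List.getD_append_length_add]
      · rwa [Nat.add_assoc, List.getD_append_length_add, List.getD_append_length_add]

theorem has123Star_concat {L : List ℕ} {n : ℕ} (hL : L.Nodup) (hLn : ∀ a ∈ L, a < n) :
    Has123Star (L ++ [n]) ↔
      Has123Star L ∨ (2 ≤ L.length ∧ L.getD (L.length - 1) 0 = n - 1) := by
  have left {i : ℕ} (hi : i < L.length) := List.getD_append L [n] 0 i hi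
  have last : (L ++ [n]).getD L.length 0 = n := by simp
  have len : (L ++ [n]).length = L.length + 1 := by simp
  constructor
  · rintro ⟨i, j, hij, hj, hlt, hsucc⟩
    rw [len] at hj
    rw [left (by omega), left (by omega)] at hlt
    by_cases hjL : j + 1 < L.length
    · rw [left hjL, left (by omega)] at hsucc
      exact Or.inl ⟨i, j, hij, hjL, hlt, hsucc⟩
    · have hjL : j + 1 = L.length := by omega
      rw [hjL, last, left (by omega)] at hsucc
      exact Or.inr ⟨by omega, by rw [← hjL, Nat.add_sub_cancel]; omega⟩
  · rintro (⟨i, j, hij, hj, hlt, hsucc⟩ | ⟨hlen, hlast⟩)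
    · refine ⟨i, j, hij, by rw [len]; omega, ?_, ?_⟩
      · rwa [left (by omega), left (by omega)]
      · rwa [left hj, left (by omega)]
    · have hfirst : L.getD 0 0 < n - 1 := by
        have hne : L.getD 0 0 ≠ L.getD (L.length - 1) 0 := by
          rw [List.getD_eq_getElem _ _ (by omega), List.getD_eq_getElem _ _ (by omega),
            Ne, hL.getElem_inj_iff]
          omega
        have := hLn _ (L.getD_mem_of_lt (show 0 < L.length by omega) 0)
        omega
      refine ⟨0, L.length - 1, by omega, by rw [len]; omega, ?_, ?_⟩
      · rwa [left (by omega), left (by omega), hlast]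
      · rw [Nat.sub_add_cancel (by omega), last, left (by omega), hlast]
        omega

theorem has123Star_map_add {x : List ℕ} {c : ℕ} :
    Has123Star (x.map (c + ·)) ↔ Has123Star x := by
  have get {i : ℕ} (hi : i < x.length) : (x.map (c + ·)).getD i 0 = c + x.getD i 0 := by
    rw [List.getD_eq_getElem _ _ (by simpa using hi), List.getD_eq_getElem _ _ hi,
      List.getElem_map]
  simp only [Has123Star, List.length_map]
  refine exists_congr fun i => exists_congr fun j => and_congr_right fun hij =>
    and_congr_right fun hj => ?_
  rw [get (by omega), get (by omega), get hj]
  omega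

theorem has132_append_cons_iff {L R : List ℕ} {n : ℕ} (hLn : ∀ a ∈ L, a ≤ n)
    (hRn : ∀ b ∈ R, b ≤ n) (hRL : ∀ a ∈ L, ∀ b ∈ R, b ≤ a) :
    Has132 (L ++ n :: R) ↔ Has132 L ∨ Has132 R := by
  rw [List.append_cons, has132_append_of_le, has132_concat_of_le hLn]
  simpa [or_imp, forall_and] using ⟨hRL, hRn⟩

theorem has123Star_append_cons_iff {L R : List ℕ} {n : ℕ} (hL : L.Nodup)
    (hLn : ∀ a ∈ L, a < n) (hRn : ∀ b ∈ R, b ≤ n) (hRL : ∀ a ∈ L, ∀ b ∈ R, b ≤ a) :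
    Has123Star (L ++ n :: R) ↔
      Has123Star (L ++ R) ∨ (2 ≤ L.length ∧ L.getD (L.length - 1) 0 = n - 1) := by
  rw [List.append_cons, has123Star_append_of_le, has123Star_concat hL hLn,
    has123Star_append_of_le hRL]
  · tauto
  · simpa [or_imp, forall_and] using ⟨hRL, hRn⟩

theorem lt_of_not_has132_append_cons {L R : List ℕ} {n : ℕ} (hx : (L ++ n :: R).Nodup)
    (hRn : ∀ b ∈ R, b ≤ n) (h : ¬Has132 (L ++ n :: R)) :
    ∀ a ∈ L, ∀ b ∈ R, b < a := by
  intro a ha b hb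
  obtain ⟨-, hnR, hLR⟩ := List.nodup_append.1 hx
  have hbn : b ≠ n := fun hbn => (List.nodup_cons.1 hnR).1 (hbn ▸ hb)
  have hab : a ≠ b := hLR a ha b (List.mem_cons_of_mem n hb)
  by_contra! hle
  have hsub : [a, n, b].Sublist (L ++ n :: R) :=
    (List.singleton_sublist.2 ha).append ((List.singleton_sublist.2 hb).cons_cons n)
  exact h ⟨a, n, b, hsub, by have := hRn b hb; omega, by have := hRn b hb; omega⟩

theorem perm_range'_of_append {A B : List ℕ} {s : ℕ}
    (h : (A ++ B).Perm (List.range' s (A.length + B.length)))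
    (hBA : ∀ a ∈ A, ∀ b ∈ B, b < a) :
    A.Perm (List.range' (s + B.length) A.length) ∧ B.Perm (List.range' s B.length) := by
  have hnd := h.nodup_iff.2 List.nodup_range'
  have hmem (v : ℕ) (hv : v ∈ A ++ B) : s ≤ v ∧ v < s + (A.length + B.length) :=
    List.mem_range'_1.1 (h.subset hv)
  -- an entry `b ≥ s + |B|` of `B` would leave no room for the `|A| + 1` entries `b :: A`
  have hB : B.Perm (List.range' s B.length) := by
    refine (List.Nodup.subperm (List.nodup_append.1 hnd).2.1 fun b hb => ?_).perm_of_length_le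
      (by simp)
    have hb' := hmem b (List.mem_append_right A hb)
    refine List.mem_range'_1.2 ⟨hb'.1, ?_⟩
    by_contra! hge
    have hsub : (b :: A).Subperm (List.range' b (s + (A.length + B.length) - b)) := by
      refine List.Nodup.subperm (List.nodup_cons.2 ⟨fun hbA => ?_, (List.nodup_append.1 hnd).1⟩)
        fun a ha => ?_
      · exact lt_irrefl b (hBA b hbA b hb)
      · rcases List.mem_cons.1 ha with rfl | ha
        · exact List.mem_range'_1.2 ⟨le_rfl, by omega⟩
        · have := hBA a ha b hb
          have := hmem a (List.mem_append_left B ha)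
          exact List.mem_range'_1.2 ⟨by omega, by omega⟩
    have := hsub.length_le
    simp only [List.length_cons, List.length_range'] at this
    omega
  refine ⟨?_, hB⟩
  rw [← List.perm_append_right_iff B]
  refine h.trans ?_
  rw [Nat.add_comm, ← List.range'_append (step := 1), one_mul]
  exact List.perm_append_comm.trans (List.Perm.append_left _ hB.symm)

theorem perm_range'_append_cons_iff {L R : List ℕ} {n : ℕ} (hn : L.length + R.length + 1 = n)
    (hRL : ∀ a ∈ L, ∀ b ∈ R, b < a) :
    (L ++ n :: R).Perm (List.range' 1 n) ↔
      L.Perm (List.range' (R.length + 1) L.length) ∧ R.Perm (List.range' 1 R.length) := by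
  have hmid : (L ++ n :: R).Perm (L ++ R ++ [n]) :=
    List.perm_middle.trans (List.perm_append_singleton n (L ++ R)).symm
  rw [hmid.congr_left, ← hn, List.range'_1_concat, Nat.add_comm 1, List.perm_append_right_iff]
  constructor
  · intro h
    rw [Nat.add_comm R.length]
    exact perm_range'_of_append h hRL
  · rintro ⟨hL, hR⟩
    refine (hL.append hR).trans (List.perm_append_comm.trans ?_)
    rw [Nat.add_comm L.length, ← List.range'_append (step := 1), one_mul, Nat.add_comm 1]

theorem lt_of_perm_range'_append_cons {L R : List ℕ} {n : ℕ}
    (h : (L ++ n :: R).Perm (List.range' 1 n)) : ∀ v ∈ L ++ R, v < n := by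
  have hnR := (List.nodup_cons.1 (List.nodup_middle.1 (h.nodup_iff.2 List.nodup_range'))).1
  intro v hv
  have hne : v ≠ n := fun hvn => hnR (hvn ▸ hv)
  have := List.mem_range'_1.1 (h.subset (List.mem_append.2
    ((List.mem_append.1 hv).imp_right (List.mem_cons_of_mem n))))
  omega

theorem mem_of_perm_range' {x : List ℕ} {n : ℕ} (h : x.Perm (List.range' 1 n)) (hn : 1 ≤ n) :
    n ∈ x :=
  h.mem_iff.2 (List.mem_range'_1.2 ⟨hn, by omega⟩)

theorem notMem_of_perm_range'_append_cons {L R : List ℕ} {n : ℕ}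
    (h : (L ++ n :: R).Perm (List.range' 1 n)) : n ∉ L :=
  fun hn => lt_irrefl n (lt_of_perm_range'_append_cons h n (List.mem_append_left R hn))

instance : DecidablePred Has132 := fun _ => decidable_of_iff _ containsPat_132_iff

instance : DecidablePred Has123Star := fun _ => decidable_of_iff _ has123star_iff

def SubmaxPrecedesMax (n : ℕ) (x : List ℕ) : Prop :=
  x.idxOf n = x.idxOf (n - 1) + 1 ∧ 1 ≤ x.idxOf (n - 1)

instance (n : ℕ) : DecidablePred (SubmaxPrecedesMax n) := fun _ => instDecidableAnd

theorem idxOf_append_cons_self {L R : List ℕ} {n : ℕ} (h : n ∉ L) :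
    (L ++ n :: R).idxOf n = L.length := by
  rw [List.idxOf_append_of_notMem h, List.idxOf_cons_self, Nat.add_zero]

theorem submaxPrecedesMax_append_cons_iff {L R : List ℕ} {n : ℕ} (hx : (L ++ n :: R).Nodup) :
    SubmaxPrecedesMax n (L ++ n :: R) ↔ 2 ≤ L.length ∧ L.getD (L.length - 1) 0 = n - 1 := by
  set x := L ++ n :: R
  have hnL : n ∉ L := fun h => (List.nodup_append.1 hx).2.2 n h n List.mem_cons_self rfl
  have hlen : x.length = L.length + R.length + 1 := by
    simp only [x, List.length_append, List.length_cons]; omega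
  have hxL {i : ℕ} (hi : i < L.length) : x.getD i 0 = L.getD i 0 := List.getD_append L _ 0 i hi
  rw [SubmaxPrecedesMax, idxOf_append_cons_self hnL]
  constructor
  · rintro ⟨hidx, hpos⟩
    have hlt : x.idxOf (n - 1) < x.length := by omega
    have hget : x.getD (x.idxOf (n - 1)) 0 = n - 1 := by
      rw [List.getD_eq_getElem _ _ hlt, List.getElem_idxOf hlt]
    refine ⟨by omega, ?_⟩
    rwa [show x.idxOf (n - 1) = L.length - 1 by omega, hxL (by omega)] at hget
  · rintro ⟨hlen2, hlast⟩
    have hget : x[L.length - 1]'(by omega) = n - 1 := by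
      rw [← List.getD_eq_getElem x 0, hxL (by omega), hlast]
    have hidx : x.idxOf (n - 1) = L.length - 1 := by
      rw [← hget, hx.idxOf_getElem]
    omega

theorem has123Star_iff_erase_or_submaxPrecedesMax {x : List ℕ} {n : ℕ} (hn : 1 ≤ n)
    (hx : x.Perm (List.range' 1 n)) (h : ¬Has132 x) :
    Has123Star x ↔ Has123Star (x.erase n) ∨ SubmaxPrecedesMax n x := by
  obtain ⟨L, R, rfl⟩ := List.append_of_mem (mem_of_perm_range' hx hn)
  have hnd := hx.nodup_iff.2 List.nodup_range'
  have hlt := lt_of_perm_range'_append_cons hx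
  have hRn (b : ℕ) (hb : b ∈ R) : b ≤ n := (hlt b (List.mem_append_right L hb)).le
  have hRL := lt_of_not_has132_append_cons hnd hRn h
  have hnL := notMem_of_perm_range'_append_cons hx
  rw [has123Star_append_cons_iff (List.nodup_append.1 hnd).1
      (fun a ha => hlt a (List.mem_append_left R ha)) hRn (fun a ha b hb => (hRL a ha b hb).le),
    submaxPrecedesMax_append_cons_iff hnd, List.erase_append_right _ hnL, List.erase_cons_head]

open Finset

def avoiders (l : List ℕ) : Finset (List ℕ) :=
  {x ∈ l.permutations.toFinset | ¬Has132 x ∧ ¬Has123Star x}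

def eraseMaxAvoiders (n : ℕ) : Finset (List ℕ) :=
  {x ∈ (List.range' 1 n).permutations.toFinset | ¬Has132 x ∧ ¬Has123Star (x.erase n)}

theorem length_filter_permutations {l : List ℕ} (hl : l.Nodup) (p : List ℕ → Bool) :
    (l.permutations.filter p).length = #{x ∈ l.permutations.toFinset | p x} := by
  rw [← List.toFinset_filter,
    List.toFinset_card_of_nodup ((List.nodup_permutations l hl).filter p)]

theorem gCount_eq_card_avoiders (n : ℕ) : gCount n = #(avoiders (List.range' 1 n)) := by
  rw [gCount, length_filter_permutations List.nodup_range', avoiders]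
  congr 1
  refine filter_congr fun x _ => ?_
  simp only [Bool.and_eq_true, Bool.not_eq_true', ← Bool.not_eq_true, containsPat_132_iff,
    has123star_iff]

theorem fCount_eq_card_filter (n : ℕ) :
    fCount n = #{x ∈ eraseMaxAvoiders n | SubmaxPrecedesMax n x} := by
  rw [fCount, length_filter_permutations List.nodup_range', eraseMaxAvoiders, filter_filter]
  congr 1
  refine filter_congr fun x _ => ?_
  simp only [Bool.and_eq_true, Bool.not_eq_true', beq_iff_eq, decide_eq_true_eq,
    SubmaxPrecedesMax, ← Bool.not_eq_true, containsPat_132_iff, has123star_iff]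
  tauto

theorem gCount_eq_card_filter {n : ℕ} (hn : 1 ≤ n) :
    gCount n = #{x ∈ eraseMaxAvoiders n | ¬SubmaxPrecedesMax n x} := by
  rw [gCount_eq_card_avoiders, avoiders, eraseMaxAvoiders, filter_filter]
  congr 1
  refine filter_congr fun x hx => ?_
  have hx := List.mem_permutations.1 (List.mem_toFinset.1 hx)
  by_cases h : Has132 x
  · simp [h]
  · rw [has123Star_iff_erase_or_submaxPrecedesMax hn hx h]
    tauto

theorem card_avoiders_map_add (l : List ℕ) (c : ℕ) :
    #(avoiders (l.map (c + ·))) = #(avoiders l) := by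
  have hinj : Function.Injective (List.map (c + ·)) :=
    List.map_injective_iff.2 (add_right_injective c)
  have himage : (l.permutations.map (List.map (c + ·))).toFinset =
      l.permutations.toFinset.image (List.map (c + ·)) :=
    Multiset.toFinset_map _ (l.permutations : Multiset (List ℕ))
  rw [avoiders, ← List.map_permutations, himage, filter_image,
    card_image_of_injective _ hinj, avoiders]
  simp only [has132_map_of_strictMono add_right_strictMono, has123Star_map_add]

theorem card_avoiders_range' (s k : ℕ) : #(avoiders (List.range' (s + 1) k)) = gCount k := by
  rw [gCount_eq_card_avoiders, ← card_avoiders_map_add (List.range' 1 k) s, List.map_add_range']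

theorem perm_of_mem_avoiders {l x : List ℕ} (hx : x ∈ avoiders l) : x.Perm l :=
  List.mem_permutations.1 (List.mem_toFinset.1 (mem_filter.1 hx).1)

theorem perm_of_mem_eraseMaxAvoiders {n : ℕ} {x : List ℕ} (hx : x ∈ eraseMaxAvoiders n) :
    x.Perm (List.range' 1 n) :=
  List.mem_permutations.1 (List.mem_toFinset.1 (mem_filter.1 hx).1)

theorem append_cons_mem_eraseMaxAvoiders_iff {L R : List ℕ} {n : ℕ}
    (hn : L.length + R.length + 1 = n) :
    L ++ n :: R ∈ eraseMaxAvoiders n ↔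
      L ∈ avoiders (List.range' (R.length + 1) L.length) ∧
        R ∈ avoiders (List.range' 1 R.length) := by
  simp only [eraseMaxAvoiders, avoiders, mem_filter, List.mem_toFinset, List.mem_permutations]
  have key (hperm : (L ++ n :: R).Perm (List.range' 1 n)) (hRL : ∀ a ∈ L, ∀ b ∈ R, b < a) :
      (¬Has132 (L ++ n :: R) ∧ ¬Has123Star ((L ++ n :: R).erase n)) ↔
        (¬Has132 L ∧ ¬Has123Star L) ∧ (¬Has132 R ∧ ¬Has123Star R) := by
    have hlt := lt_of_perm_range'_append_cons hperm
    have hnL := notMem_of_perm_range'_append_cons hperm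
    rw [has132_append_cons_iff (fun a ha => (hlt a (List.mem_append_left R ha)).le)
        (fun b hb => (hlt b (List.mem_append_right L hb)).le) (fun a ha b hb => (hRL a ha b hb).le),
      List.erase_append_right _ hnL, List.erase_cons_head,
      has123Star_append_of_le (fun a ha b hb => (hRL a ha b hb).le)]
    tauto
  constructor
  · rintro ⟨hperm, havoid⟩
    have hRL := lt_of_not_has132_append_cons (hperm.nodup_iff.2 List.nodup_range')
      (fun b hb => (lt_of_perm_range'_append_cons hperm b (List.mem_append_right L hb)).le)
      havoid.1
    rw [key hperm hRL] at havoid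
    rw [perm_range'_append_cons_iff hn hRL] at hperm
    exact ⟨⟨hperm.1, havoid.1⟩, ⟨hperm.2, havoid.2⟩⟩
  · rintro ⟨⟨hL, hLavoid⟩, ⟨hR, hRavoid⟩⟩
    have hRL (a : ℕ) (ha : a ∈ L) (b : ℕ) (hb : b ∈ R) : b < a := by
      have := List.mem_range'_1.1 (hL.subset ha)
      have := List.mem_range'_1.1 (hR.subset hb)
      omega
    have hperm := (perm_range'_append_cons_iff hn hRL).2 ⟨hL, hR⟩
    exact ⟨hperm, (key hperm hRL).2 ⟨hLavoid, hRavoid⟩⟩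

theorem filter_idxOf_eq_image {n k : ℕ} (hk : k < n) :
    {x ∈ eraseMaxAvoiders n | x.idxOf n = k} =
      (avoiders (List.range' (n - 1 - k + 1) k) ×ˢ avoiders (List.range' 1 (n - 1 - k))).image
        fun p => p.1 ++ n :: p.2 := by
  ext x
  simp only [mem_filter, mem_image, mem_product, Prod.exists]
  constructor
  · rintro ⟨hx, rfl⟩
    have hperm := perm_of_mem_eraseMaxAvoiders hx
    obtain ⟨L, R, rfl⟩ := List.append_of_mem (mem_of_perm_range' hperm (by omega))
    have hlen : L.length + R.length + 1 = n := by simpa [← Nat.add_assoc] using hperm.length_eq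
    rw [idxOf_append_cons_self (notMem_of_perm_range'_append_cons hperm),
      show n - 1 - L.length = R.length by omega]
    exact ⟨L, R, (append_cons_mem_eraseMaxAvoiders_iff hlen).1 hx, rfl⟩
  · rintro ⟨L, R, ⟨hL, hR⟩, rfl⟩
    have hLlen : L.length = k := by simpa using (perm_of_mem_avoiders hL).length_eq
    have hRlen : R.length = n - 1 - k := by simpa using (perm_of_mem_avoiders hR).length_eq
    have hx : L ++ n :: R ∈ eraseMaxAvoiders n := by
      rw [append_cons_mem_eraseMaxAvoiders_iff (by omega), hLlen, hRlen]
      exact ⟨hL, hR⟩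
    refine ⟨hx, ?_⟩
    rw [idxOf_append_cons_self (notMem_of_perm_range'_append_cons
      (perm_of_mem_eraseMaxAvoiders hx)), hLlen]

theorem card_filter_idxOf_eq {n k : ℕ} (hk : k < n) :
    #{x ∈ eraseMaxAvoiders n | x.idxOf n = k} = gCount k * gCount (n - 1 - k) := by
  rw [filter_idxOf_eq_image hk, card_image_of_injOn, card_product, card_avoiders_range',
    ← gCount_eq_card_avoiders]
  rintro ⟨L, R⟩ hLR ⟨L', R'⟩ hLR' heq
  simp only [coe_product, Set.mem_prod, mem_coe] at hLR hLR'
  have hlen : L.length = L'.length := by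
    rw [(perm_of_mem_avoiders hLR.1).length_eq, (perm_of_mem_avoiders hLR'.1).length_eq]
  obtain ⟨hL, hR⟩ := List.append_inj heq hlen
  exact Prod.ext hL ((List.cons_inj_right n).1 hR)

theorem card_eraseMaxAvoiders {n : ℕ} (hn : 1 ≤ n) :
    #(eraseMaxAvoiders n) = ∑ k ∈ range n, gCount k * gCount (n - 1 - k) := by
  rw [card_eq_sum_card_fiberwise (f := fun x => x.idxOf n) (t := range n)]
  · exact sum_congr rfl fun k hk => card_filter_idxOf_eq (mem_range.1 hk)
  · intro x hx
    have hperm := perm_of_mem_eraseMaxAvoiders hx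
    have := List.idxOf_lt_length_of_mem (mem_of_perm_range' hperm hn)
    rw [hperm.length_eq, List.length_range'] at this
    simpa using this

/-- For `n ≥ 2`, `Σ_{i=0}^{n-1} g i * g (n-1-i) = g n + f n`. -/
theorem sum_g_eq (n : ℕ) (hn : 2 ≤ n) :
    ∑ i ∈ Finset.range n, gCount i * gCount (n-1-i) = gCount n + fCount n := by
  rw [← card_eraseMaxAvoiders (by omega), gCount_eq_card_filter (by omega), fCount_eq_card_filter,
    add_comm]
  exact (card_filter_add_card_filter_not _).symm
end

section
/- Suppose x ∈ S_n avoids 123 and every cell C_{i,j} of its grid decomposition contains at most one entry, where cells are intersections of horizontal strips determined by consecutive left-to-right minima (values strictly between m_i and m_{i-1}) and vertical strips B_j of entries between consecutive left-to-right minima. Then x avoids the bivincular pattern 132* (no positions i<j with x_i < x_{j+1} and x_j = x_{j+1}+1), and conversely. -/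
/-- Position `p` (0-based) holds a left-to-right minimum of `x`. -/
def IsLtrMinPos (x : List ℕ) (p : ℕ) : Prop :=
  p < x.length ∧ ∀ k < p, x.getD p 0 < x.getD k 0

/-!
In a 123-avoider every entry to the right of a non-minimum `x a` is smaller than `x a`, since an
earlier entry below `x a` would otherwise complete a 123; in particular the non-minima decrease.
Hence a 132* occurrence `x j = x (j+1) + 1` is a pair of adjacent non-minima with no value
between them, i.e. two entries of one cell.  Conversely, if `p < q` share a cell, then
`x p > ⋯ > x (q-1) > x q` are non-minima.  The value `x q + 1` occurs in the permutation and is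
not a minimum (it would split the horizontal strip), so by monotonicity it sits at position
`q - 1`; and the earlier entry below `x p` is also below `x q`, giving a 132* ending at `q`.
-/

def InSameCell (x : List ℕ) (p q : ℕ) : Prop :=
  q < x.length ∧ (∀ r, p ≤ r → r ≤ q → ¬ IsLtrMinPos x r) ∧
    ∀ m, IsLtrMinPos x m → (x.getD m 0 < x.getD p 0 ↔ x.getD m 0 < x.getD q 0)

section

variable {x : List ℕ} {n : ℕ}

theorem isoOrd_123 {a b c : ℕ} (h₁ : a < b) (h₂ : b < c) : isoOrd [1,2,3] [a,b,c] = true := by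
  simp [isoOrd, List.range_succ, h₁, h₂, h₁.le, h₂.le, h₁.trans h₂, (h₁.trans h₂).le]

theorem containsPat_123_of_lt {i j k : ℕ} (hij : i < j) (hjk : j < k) (hk : k < x.length)
    (h₁ : x.getD i 0 < x.getD j 0) (h₂ : x.getD j 0 < x.getD k 0) :
    containsPat [1,2,3] x = true := by
  have hi : i < x.length := by omega
  have hj : j < x.length := by omega
  have hsub : [x.getD i 0, x.getD j 0, x.getD k 0].Sublist x := by
    simpa [List.getD_eq_getElem, hi, hj, hk] using
      List.map_getElem_sublist (l := x) (is := [⟨i, hi⟩, ⟨j, hj⟩, ⟨k, hk⟩])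
        (by simp [hij, hjk, hij.trans hjk])
  simp only [containsPat, List.any_eq_true]
  exact ⟨_, List.mem_sublistsLen.2 ⟨hsub, rfl⟩, isoOrd_123 h₁ h₂⟩

theorem List.getD_mem {α : Type*} {l : List α} {i : ℕ} (d : α) (hi : i < l.length) :
    l.getD i d ∈ l := by
  rw [List.getD_eq_getElem _ _ hi]
  exact List.getElem_mem hi

theorem IsPermList.nodup (hx : IsPermList n x) : x.Nodup :=
  hx.nodup_iff.2 (List.nodup_range' _ Nat.one_pos)

theorem IsPermList.succ_mem (hx : IsPermList n x) {a b : ℕ} (ha : a ∈ x) (hb : b ∈ x)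
    (hab : a < b) : a + 1 ∈ x := by
  rw [hx.mem_iff, List.mem_range'_1] at ha hb ⊢
  omega

theorem getD_ne_getD (hnd : x.Nodup) {a b : ℕ} (ha : a < x.length) (hb : b < x.length)
    (hab : a ≠ b) : x.getD a 0 ≠ x.getD b 0 := by
  rw [List.getD_eq_getElem _ _ ha, List.getD_eq_getElem _ _ hb]
  exact fun e => hab (hnd.getElem_inj_iff.1 e)

theorem not_isLtrMinPos_of_getD_le {k a : ℕ} (hk : k < a) (h : x.getD k 0 ≤ x.getD a 0) :
    ¬ IsLtrMinPos x a :=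
  fun ha => (ha.2 k hk).not_ge h

theorem exists_getD_lt_of_not_isLtrMinPos (hnd : x.Nodup) {a : ℕ} (ha : a < x.length)
    (h : ¬ IsLtrMinPos x a) : ∃ k < a, x.getD k 0 < x.getD a 0 := by
  simp only [IsLtrMinPos, ha, true_and, not_forall, not_lt] at h
  obtain ⟨k, hk, hle⟩ := h
  exact ⟨k, hk, hle.lt_of_ne (getD_ne_getD hnd (by omega) ha hk.ne)⟩

theorem getD_lt_getD_of_not_isLtrMinPos (hnd : x.Nodup) (h123 : containsPat [1,2,3] x = false)
    {a b : ℕ} (hab : a < b) (hb : b < x.length) (ha' : ¬ IsLtrMinPos x a) :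
    x.getD b 0 < x.getD a 0 := by
  obtain ⟨k, hk, hka⟩ := exists_getD_lt_of_not_isLtrMinPos hnd (hab.trans hb) ha'
  refine lt_of_le_of_ne (not_lt.1 fun hlt => ?_) (getD_ne_getD hnd hb (by omega) hab.ne')
  exact absurd (containsPat_123_of_lt hk hab hb hka hlt) (by simp [h123])

theorem Has132Star.exists_inSameCell (hnd : x.Nodup) (h : Has132Star x) :
    ∃ j, InSameCell x j (j + 1) := by
  obtain ⟨i, j, hij, hj, hi, hjj⟩ := h
  have hvert : ∀ r, j ≤ r → r ≤ j + 1 → ¬ IsLtrMinPos x r := fun r h₁ h₂ => by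
    obtain rfl | rfl : r = j ∨ r = j + 1 := by omega
    · exact not_isLtrMinPos_of_getD_le hij (by omega)
    · exact not_isLtrMinPos_of_getD_le (by omega : i < j + 1) hi.le
  refine ⟨j, hj, hvert, fun m hm => ?_⟩
  have : x.getD m 0 ≠ x.getD (j + 1) 0 :=
    getD_ne_getD hnd hm.1 hj fun e => hvert (j + 1) (by omega) le_rfl (e ▸ hm)
  omega

theorem getD_pred_eq_succ_of_inSameCell (hx : IsPermList n x)
    (h123 : containsPat [1,2,3] x = false) {p q : ℕ} (hpq : p < q) (hc : InSameCell x p q) :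
    x.getD (q - 1) 0 = x.getD q 0 + 1 := by
  obtain ⟨hq, hvert, hhor⟩ := hc
  have hdec : ∀ a b, p ≤ a → a < b → b ≤ q → x.getD b 0 < x.getD a 0 := fun a b h₁ h₂ h₃ =>
    getD_lt_getD_of_not_isLtrMinPos hx.nodup h123 h₂ (by omega) (hvert a h₁ (by omega))
  have hpred : x.getD q 0 < x.getD (q - 1) 0 := hdec _ _ (by omega) (by omega) le_rfl
  have hp : x.getD (q - 1) 0 ≤ x.getD p 0 := by
    obtain h | h : p = q - 1 ∨ p < q - 1 := by omega
    · rw [h]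
    · exact (hdec _ _ le_rfl h (by omega)).le
  by_contra hne
  have hmem : x.getD q 0 + 1 ∈ x :=
    hx.succ_mem (List.getD_mem 0 hq) (List.getD_mem 0 (by omega)) hpred
  obtain ⟨t, ht, hxt⟩ := List.getElem_of_mem hmem
  rw [← List.getD_eq_getElem _ 0 ht] at hxt
  have ht' : ¬ IsLtrMinPos x t := fun hm => by
    have := hhor t hm
    omega
  rcases lt_trichotomy t (q - 1) with h | rfl | h
  · have := getD_lt_getD_of_not_isLtrMinPos hx.nodup h123 h (by omega) ht'
    omega
  · omega
  · obtain rfl | h' : t = q ∨ q < t := by omega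
    · omega
    · have := getD_lt_getD_of_not_isLtrMinPos hx.nodup h123 h' ht (hvert q (by omega) le_rfl)
      omega

theorem exists_getD_lt_of_inSameCell (hnd : x.Nodup) (h123 : containsPat [1,2,3] x = false)
    {p q : ℕ} (hpq : p < q) (hc : InSameCell x p q) : ∃ i < p, x.getD i 0 < x.getD q 0 := by
  obtain ⟨hq, hvert, hhor⟩ := hc
  have hp := hvert p le_rfl hpq.le
  obtain ⟨i, hi, hip⟩ := exists_getD_lt_of_not_isLtrMinPos hnd (by omega) hp
  refine ⟨i, hi, ?_⟩
  by_cases hmin : IsLtrMinPos x i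
  · exact (hhor i hmin).1 hip
  · exact absurd hip (getD_lt_getD_of_not_isLtrMinPos hnd h123 hi (by omega) hmin).asymm

theorem has132Star_of_inSameCell (hx : IsPermList n x) (h123 : containsPat [1,2,3] x = false)
    {p q : ℕ} (hpq : p < q) (hc : InSameCell x p q) : Has132Star x := by
  obtain ⟨i, hi, hiq⟩ := exists_getD_lt_of_inSameCell hx.nodup h123 hpq hc
  have hstep := getD_pred_eq_succ_of_inSameCell hx h123 hpq hc
  obtain ⟨j, rfl⟩ : ∃ j, q = j + 1 := ⟨q - 1, by omega⟩
  exact ⟨i, j, by omega, hc.1, hiq, hstep⟩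

end

/-- For `x ∈ Av_n(123)` : every cell of the grid decomposition of `x` contains at most one
entry iff `x` avoids `132*`.  Two non-left-to-right-minimum positions `p < q` lie in the same
cell iff there is no left-to-right minimum strictly between them (same vertical strip) and
every left-to-right minimum value lies below `x p` iff it lies below `x q`
(same horizontal strip). -/
theorem cells_at_most_one_iff_avoids_132star (n : ℕ) (x : List ℕ) (hx : IsPermList n x)
    (h123 : containsPat [1,2,3] x = false) :
    (∀ p q, p < q → q < x.length → ¬ IsLtrMinPos x p → ¬ IsLtrMinPos x q →
        (∀ r, p < r → r < q → ¬ IsLtrMinPos x r) →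
        (∀ m, IsLtrMinPos x m → (x.getD m 0 < x.getD p 0 ↔ x.getD m 0 < x.getD q 0)) →
        False) ↔
      ¬ Has132Star x := by
  constructor
  · rintro H h132
    obtain ⟨j, hj, hvert, hhor⟩ := h132.exists_inSameCell hx.nodup
    exact H j (j + 1) (lt_add_one j) hj (hvert j le_rfl (by omega)) (hvert _ (by omega) le_rfl)
      (fun r h₁ h₂ => by omega) hhor
  · intro h132 p q hpq hq hp hq' hbetween hhor
    refine h132 (has132Star_of_inSameCell hx h123 hpq ⟨hq, fun r h₁ h₂ => ?_, hhor⟩)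
    rcases h₁.eq_or_lt with rfl | h₁
    · exact hp
    rcases h₂.eq_or_lt with rfl | h₂
    · exact hq'
    exact hbetween r h₁ h₂
end
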